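/- Let Ψ be a partition of ℝ^d with mesh ε, A ⊆ ℝ^d finite, and Q_1 the snap complex of Čech_1(A) along Ψ. Then the p-th persistent Betti number β_p(Čech_1(A), Čech_{1+ε}(A)) is at most β_p(Q_1), the p-th Betti number of the snap complex, for every p. -/
import Mathlib


/-- The radius of the smallest closed ball enclosing `B`. -/
noncomputable def encRad {d : ℕ} (B : Finset (EuclideanSpace ℝ (Fin d))) : ℝ :=
  sInf {r | ∃ x, ∀ b ∈ B, dist b x ≤ r}

/-- The Čech complex of `A ⊆ ℝ^d` at scale `r`: nonempty subsets of `A` such that the closed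
balls of radius `r` around the points have a common point. -/
def cech (d : ℕ) (r : ℝ) (A : Finset (EuclideanSpace ℝ (Fin d))) :
    Set (Finset (EuclideanSpace ℝ (Fin d))) :=
  {B | B.Nonempty ∧ ↑B ⊆ (↑A : Set (EuclideanSpace ℝ (Fin d))) ∧ ∃ x, ∀ b ∈ B, dist b x ≤ r}

/-- `Ψ` is a partition of `ℝ^d` into cells of diameter at most `ε`. -/
def IsPartitionMesh (d : ℕ) (ε : ℝ) (Ψ : Set (Set (EuclideanSpace ℝ (Fin d)))) : Prop :=
  (∀ x, ∃! ψ, ψ ∈ Ψ ∧ x ∈ ψ) ∧ ∀ ψ ∈ Ψ, EMetric.diam ψ ≤ ENNReal.ofReal ε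

attribute [local instance] Classical.propDecidable

/-- The mod-2 simplicial boundary operator on formal sums of finite vertex sets. -/
noncomputable def bdry (V : Type*) [DecidableEq V] :
    (Finset V →₀ ZMod 2) →ₗ[ZMod 2] (Finset V →₀ ZMod 2) :=
  Finsupp.lsum (ZMod 2) fun σ =>
    LinearMap.toSpanSingleton (ZMod 2) _ (∑ v ∈ σ, Finsupp.single (σ.erase v) (1 : ZMod 2))

/-- Chains supported on the `p`-simplices (sets of `p+1` vertices) of `K`. -/
noncomputable def chainsIn {V : Type*} (K : Set (Finset V)) (p : ℕ) :
    Submodule (ZMod 2) (Finset V →₀ ZMod 2) :=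
  Finsupp.supported (ZMod 2) (ZMod 2) {σ | σ ∈ K ∧ σ.card = p + 1}

noncomputable def cyclesIn {V : Type*} [DecidableEq V] (K : Set (Finset V)) (p : ℕ) :
    Submodule (ZMod 2) (Finset V →₀ ZMod 2) :=
  chainsIn K p ⊓ LinearMap.ker (bdry V)

noncomputable def bdriesIn {V : Type*} [DecidableEq V] (K : Set (Finset V)) (p : ℕ) :
    Submodule (ZMod 2) (Finset V →₀ ZMod 2) :=
  Submodule.map (bdry V) (chainsIn K (p + 1))

/-- The `p`-th persistent Betti number of `K ⊆ L`: the rank of the image of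
`H_p(K) → H_p(L)`, computed as `Z_p(K) / (Z_p(K) ∩ B_p(L))`. -/
noncomputable def pBetti {V : Type*} [DecidableEq V] (K L : Set (Finset V)) (p : ℕ) : Cardinal :=
  Module.rank (ZMod 2) ↥(Submodule.map (bdriesIn L p).mkQ (cyclesIn K p))

noncomputable def betti {V : Type*} [DecidableEq V] (K : Set (Finset V)) (p : ℕ) : Cardinal :=
  pBetti K K p

/-- Pushforward of a `p`-chain along a vertex map; degenerate simplices are dropped and
coinciding images cancel mod 2. -/
noncomputable def pushChain {V W : Type*} [DecidableEq V] [DecidableEq W]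
    (q : V → W) (p : ℕ) (c : Finset V →₀ ZMod 2) : Finset W →₀ ZMod 2 :=
  Finsupp.filter (fun τ => τ.card = p + 1)
    (Finsupp.mapDomain (fun σ : Finset V => σ.image q) c)

/-- Gluing vertices `x` and `y` of a `p`-chain to a new vertex `z`. -/
noncomputable def glueChain {V : Type*} [DecidableEq V] (x y z : V) (p : ℕ)
    (c : Finset V →₀ ZMod 2) : Finset V →₀ ZMod 2 :=
  pushChain (fun v => if v = x ∨ v = y then z else v) p c

/-- The star of a vertex in a chain: the simplices of the chain containing it. -/
noncomputable def starChain {V : Type*} (x : V) (c : Finset V →₀ ZMod 2) :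
    Finset V →₀ ZMod 2 :=
  Finsupp.filter (fun σ => x ∈ σ) c

/-- The cone over a chain with apex `z`. -/
noncomputable def coneChain {V : Type*} [DecidableEq V] (z : V) (c : Finset V →₀ ZMod 2) :
    Finset V →₀ ZMod 2 :=
  Finsupp.mapDomain (insert z) c

namespace SnapAux

open Finsupp

variable {V : Type*} {W : Type*} [DecidableEq V] [DecidableEq W]

/-- `Finsupp.filter` as a linear map. -/
noncomputable def filterLin (P : Finset V → Prop) :
    (Finset V →₀ ZMod 2) →ₗ[ZMod 2] (Finset V →₀ ZMod 2) where
  toFun := Finsupp.filter P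
  map_add' _ _ := Finsupp.filter_add
  map_smul' k c := by
    ext τ
    by_cases h : P τ <;> simp [Finsupp.filter_apply, h]

noncomputable def pushL (f : V → W) (p : ℕ) :
    (Finset V →₀ ZMod 2) →ₗ[ZMod 2] (Finset W →₀ ZMod 2) :=
  (filterLin (fun τ => τ.card = p + 1)).comp
    (Finsupp.lmapDomain (ZMod 2) (ZMod 2) (fun σ : Finset V => σ.image f))

omit [DecidableEq V] in
lemma filterLin_apply (P : Finset V → Prop) (c) : filterLin P c = Finsupp.filter P c := rfl

lemma pushL_apply (f : V → W) (p : ℕ) (c) :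
    pushL f p c = Finsupp.filter (fun τ => τ.card = p + 1)
      (Finsupp.mapDomain (fun σ : Finset V => σ.image f) c) := by
  rw [pushL, LinearMap.comp_apply, Finsupp.lmapDomain_apply, filterLin_apply]
  ext τ
  by_cases h : τ.card = p + 1 <;> simp [Finsupp.filter_apply, h]

lemma pushChain_eq (f : V → W) (p : ℕ) (c) : pushChain f p c = pushL f p c :=
  (pushL_apply f p c).symm

lemma pushL_single (f : V → W) (p : ℕ) (σ : Finset V) (k : ZMod 2) :
    pushL f p (Finsupp.single σ k) =
      if (σ.image f).card = p + 1 then Finsupp.single (σ.image f) k else 0 := by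
  rw [pushL_apply, Finsupp.mapDomain_single]
  split
  · exact Finsupp.filter_single_of_pos _ ‹_›
  · exact Finsupp.filter_single_of_neg _ ‹_›

lemma bdry_single (τ : Finset V) (k : ZMod 2) :
    bdry V (Finsupp.single τ k) = ∑ v ∈ τ, Finsupp.single (τ.erase v) k := by
  rw [bdry, Finsupp.lsum_single, LinearMap.toSpanSingleton_apply, Finset.smul_sum]
  refine Finset.sum_congr rfl fun v _ => ?_
  rw [Finsupp.smul_single, smul_eq_mul, mul_one]

omit [DecidableEq V] in
/-- reduce an identity between linear maps applied to `c` to values on singles of the support -/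
lemma eq_on_of_single {N : Type*} [AddCommMonoid N] [Module (ZMod 2) N]
    (F G : (Finset V →₀ ZMod 2) →ₗ[ZMod 2] N) (c : Finset V →₀ ZMod 2)
    (h : ∀ τ ∈ c.support, ∀ k, F (Finsupp.single τ k) = G (Finsupp.single τ k)) :
    F c = G c := by
  have h1 : F (c.sum Finsupp.single) = G (c.sum Finsupp.single) := by
    rw [map_finsuppSum, map_finsuppSum]
    exact Finsupp.sum_congr fun τ hτ => h τ hτ _
  rwa [Finsupp.sum_single] at h1

end SnapAux
namespace SnapAux2
set_option linter.unusedSectionVars false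
open Finsupp SnapAux

variable {V W X : Type*} [DecidableEq V] [DecidableEq W] [DecidableEq X]

lemma add_self {M : Type*} [AddCommMonoid M] [Module (ZMod 2) M] (x : M) : x + x = 0 := by
  calc x + x = (2 : ZMod 2) • x := by rw [two_smul]
  _ = 0 := by rw [show (2 : ZMod 2) = 0 from rfl, zero_smul]

lemma filter_single (P : Finset V → Prop) (τ : Finset V) (k : ZMod 2) :
    Finsupp.filter P (Finsupp.single τ k) = if P τ then Finsupp.single τ k else 0 := by
  split
  · exact Finsupp.filter_single_of_pos _ ‹_›
  · exact Finsupp.filter_single_of_neg _ ‹_›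

lemma image_erase_of_collide {s : Finset V} {f : V → W} {x y : V} (hx : x ∈ s)
    (hxy : x ≠ y) (hf : f x = f y) : (s.erase y).image f = s.image f := by
  apply Finset.Subset.antisymm
  · exact Finset.image_subset_image (Finset.erase_subset _ _)
  · intro b hb
    simp only [Finset.mem_image] at hb ⊢
    obtain ⟨a, ha, rfl⟩ := hb
    by_cases hay : a = y
    · exact ⟨x, Finset.mem_erase.2 ⟨hxy, hx⟩, by rw [hf, ← hay]⟩
    · exact ⟨a, Finset.mem_erase.2 ⟨hay, ha⟩, rfl⟩

lemma card_image_lt_of_collide {s : Finset V} {f : V → W} {x y : V} (hx : x ∈ s) (hy : y ∈ s)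
    (hxy : x ≠ y) (hf : f x = f y) : (s.image f).card < s.card := by
  rw [← image_erase_of_collide hx hxy hf]
  calc ((s.erase y).image f).card ≤ (s.erase y).card := Finset.card_image_le
    _ < s.card := Finset.card_erase_lt_of_mem hy

lemma image_erase_of_injOn {s : Finset V} {f : V → W} (hinj : Set.InjOn f ↑s) {v : V}
    (hv : v ∈ s) : (s.erase v).image f = (s.image f).erase (f v) := by
  ext b
  simp only [Finset.mem_image, Finset.mem_erase]
  constructor
  · rintro ⟨a, ⟨hav, ha⟩, rfl⟩
    exact ⟨fun h => hav (hinj ha hv h), a, ha, rfl⟩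
  · rintro ⟨hb, a, ha, rfl⟩
    exact ⟨a, ⟨fun h => hb (by rw [h]), ha⟩, rfl⟩

/-- The mod-2 chain map property of `pushL` on chains of pure dimension. -/
lemma bdry_pushL (f : V → W) (p : ℕ) (c : Finset V →₀ ZMod 2)
    (hc : ∀ τ ∈ c.support, τ.card = p + 1) :
    bdry W (pushL f p c) = (filterLin (fun τ => τ.card = p)).comp
      (Finsupp.lmapDomain (ZMod 2) (ZMod 2) (fun σ : Finset V => σ.image f)) (bdry V c) := by
  refine eq_on_of_single ((bdry W).comp (pushL f p))
    (((filterLin (fun τ => τ.card = p)).comp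
      (Finsupp.lmapDomain (ZMod 2) (ZMod 2) (fun σ : Finset V => σ.image f))).comp (bdry V)) c
    (fun σ hσ k => ?_)
  have hcard : σ.card = p + 1 := hc σ hσ
  simp only [LinearMap.comp_apply]
  rw [pushL_single, bdry_single, map_sum, map_sum]
  have hRHS : ∀ v ∈ σ, (filterLin (fun τ : Finset W => τ.card = p))
      (Finsupp.lmapDomain (ZMod 2) (ZMod 2) (fun σ : Finset V => σ.image f)
        (Finsupp.single (σ.erase v) k)) =
      (if ((σ.erase v).image f).card = p then Finsupp.single ((σ.erase v).image f) k else 0) := by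
    intro v hv
    rw [Finsupp.lmapDomain_apply, Finsupp.mapDomain_single, filterLin_apply, filter_single]
    congr
  rw [Finset.sum_congr rfl hRHS]
  by_cases hinj : (σ.image f).card = p + 1
  · rw [if_pos hinj]
    have hinjOn : Set.InjOn f ↑σ := by
      rw [← Finset.card_image_iff]; rw [hinj, hcard]
    rw [bdry_single]
    rw [Finset.sum_image (fun x hx y hy hxy => hinjOn hx hy hxy)]
    refine Finset.sum_congr rfl (fun v hv => ?_)
    have h1 : (σ.erase v).image f = (σ.image f).erase (f v) := image_erase_of_injOn hinjOn hv
    have h2 : ((σ.erase v).image f).card = p := by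
      rw [h1, Finset.card_erase_of_mem (Finset.mem_image_of_mem f hv), hinj]; exact Nat.add_sub_cancel p 1
    rw [if_pos h2, h1]
  · rw [if_neg hinj, map_zero]
    -- collision exists
    have hlt : (σ.image f).card < σ.card := by
      rcases lt_or_eq_of_le (Finset.card_image_le (s := σ) (f := f)) with h | h
      · exact h
      · exact absurd (h.trans hcard) hinj
    obtain ⟨x, hx, y, hy, hxy, hfxy⟩ :=
      Finset.exists_ne_map_eq_of_card_lt_of_maps_to hlt (fun a ha => Finset.mem_image_of_mem f ha)
    set T : V → (Finset W →₀ ZMod 2) :=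
      fun v => if ((σ.erase v).image f).card = p then Finsupp.single ((σ.erase v).image f) k else 0
      with hT
    have hyx : y ∈ σ.erase x := Finset.mem_erase.2 ⟨hxy.symm, hy⟩
    have hsum : ∑ v ∈ σ, T v = T x + (T y + ∑ v ∈ (σ.erase x).erase y, T v) := by
      rw [Finset.add_sum_erase _ T hyx, Finset.add_sum_erase _ T hx]
    have hTx : T x = T y := by
      have h1 : (σ.erase x).image f = σ.image f := image_erase_of_collide hy hxy.symm hfxy.symm
      have h2 : (σ.erase y).image f = σ.image f := image_erase_of_collide hx hxy hfxy
      rw [hT]; simp only [h1, h2]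
    have hTv : ∀ v ∈ (σ.erase x).erase y, T v = 0 := by
      intro v hv
      obtain ⟨hvy, hvx, hvσ⟩ : v ≠ y ∧ v ≠ x ∧ v ∈ σ := by
        obtain ⟨h1, h2⟩ := Finset.mem_erase.1 hv
        obtain ⟨h3, h4⟩ := Finset.mem_erase.1 h2
        exact ⟨h1, h3, h4⟩
      have hxv : x ∈ σ.erase v := Finset.mem_erase.2 ⟨hvx.symm, hx⟩
      have hyv : y ∈ σ.erase v := Finset.mem_erase.2 ⟨hvy.symm, hy⟩
      have : ((σ.erase v).image f).card < (σ.erase v).card :=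
        card_image_lt_of_collide hxv hyv hxy hfxy
      rw [Finset.card_erase_of_mem hvσ, hcard] at this
      simp only [Nat.add_sub_cancel] at this
      rw [hT]
      exact if_neg (Nat.ne_of_lt this)
    rw [hsum, ← hTx, Finset.sum_eq_zero hTv, add_zero, add_self]

end SnapAux2
namespace SnapAux3
set_option linter.unusedSectionVars false
open Finsupp SnapAux SnapAux2

variable {V W X : Type*} [DecidableEq V] [DecidableEq W] [DecidableEq X]

lemma pushL_congr (f f' : V → W) (p : ℕ) (c : Finset V →₀ ZMod 2)
    (h : ∀ τ ∈ c.support, ∀ v ∈ τ, f v = f' v) : pushL f p c = pushL f' p c := by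
  refine eq_on_of_single (pushL f p) (pushL f' p) c (fun τ hτ k => ?_)
  have himg : τ.image f = τ.image f' := Finset.image_congr (fun v hv => h τ hτ v hv)
  rw [pushL_single, pushL_single, himg]

lemma pushL_pushL (f₁ : V → W) (f₂ : W → X) (p : ℕ) (c : Finset V →₀ ZMod 2)
    (hc : ∀ τ ∈ c.support, τ.card = p + 1) :
    pushL f₂ p (pushL f₁ p c) = pushL (fun v => f₂ (f₁ v)) p c := by
  refine eq_on_of_single ((pushL f₂ p).comp (pushL f₁ p)) (pushL (fun v => f₂ (f₁ v)) p) c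
    (fun σ hσ k => ?_)
  have hcard : σ.card = p + 1 := hc σ hσ
  have himg : (σ.image f₁).image f₂ = σ.image (fun v => f₂ (f₁ v)) := Finset.image_image
  simp only [LinearMap.comp_apply]
  rw [pushL_single]
  by_cases h1 : (σ.image f₁).card = p + 1
  · rw [if_pos h1, pushL_single, pushL_single, himg]
  · rw [if_neg h1, map_zero, pushL_single, if_neg, ]
    have : (σ.image (fun v => f₂ (f₁ v))).card ≤ (σ.image f₁).card := by
      rw [← himg]; exact Finset.card_image_le
    have h2 : (σ.image f₁).card ≤ p + 1 := le_of_le_of_eq Finset.card_image_le hcard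
    omega

/-- The homotopy operator gluing vertex `a` to `z₀`. -/
noncomputable def HL (a z₀ : V) : (Finset V →₀ ZMod 2) →ₗ[ZMod 2] (Finset V →₀ ZMod 2) :=
  (Finsupp.lmapDomain (ZMod 2) (ZMod 2) (insert z₀)).comp
    (filterLin (fun τ => a ∈ τ ∧ z₀ ∉ τ))

lemma HL_single (a z₀ : V) (τ : Finset V) (k : ZMod 2) :
    HL a z₀ (Finsupp.single τ k) =
      if a ∈ τ ∧ z₀ ∉ τ then Finsupp.single (insert z₀ τ) k else 0 := by
  rw [HL, LinearMap.comp_apply, filterLin_apply, filter_single]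
  split
  · rw [Finsupp.lmapDomain_apply, Finsupp.mapDomain_single]
  · rw [map_zero]

lemma image_update (a z₀ : V) (τ : Finset V) (ha : a ∈ τ) :
    τ.image (fun v => if v = a then z₀ else v) = insert z₀ (τ.erase a) := by
  ext b
  simp only [Finset.mem_image, Finset.mem_insert, Finset.mem_erase]
  constructor
  · rintro ⟨v, hv, rfl⟩
    by_cases h : v = a
    · simp [h]
    · right; simp [h]; exact hv
  · rintro (rfl | ⟨hb, hbτ⟩)
    · exact ⟨a, ha, by simp⟩
    · exact ⟨b, hbτ, by simp [hb]⟩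

lemma image_fix (f : V → V) (τ : Finset V) (h : ∀ v ∈ τ, f v = v) : τ.image f = τ := by
  ext b
  simp only [Finset.mem_image]
  constructor
  · rintro ⟨v, hv, rfl⟩
    rwa [h v hv]
  · exact fun hb => ⟨b, hb, h b hb⟩

/-- The core chain-homotopy identity for moving a single vertex `a` to `z₀`. -/
lemma homotopy_single_move (a z₀ : V) (hne : a ≠ z₀) (p : ℕ) (c : Finset V →₀ ZMod 2)
    (hc : ∀ τ ∈ c.support, τ.card = p + 1) :
    pushL (fun v => if v = a then z₀ else v) p c + c =
      bdry V (HL a z₀ c) + HL a z₀ (bdry V c) := by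
  set r : V → V := fun v => if v = a then z₀ else v with hr
  refine eq_on_of_single (pushL r p + LinearMap.id)
    ((bdry V).comp (HL a z₀) + (HL a z₀).comp (bdry V)) c (fun τ hτ k => ?_)
  have hcard : τ.card = p + 1 := hc τ hτ
  simp only [LinearMap.add_apply, LinearMap.comp_apply, LinearMap.id_apply]
  -- compute HL (bdry (single τ k)) in all cases
  rw [bdry_single, map_sum]
  have hterm : ∀ v ∈ τ, HL a z₀ (Finsupp.single (τ.erase v) k) =
      if a ∈ τ.erase v ∧ z₀ ∉ τ.erase v then Finsupp.single (insert z₀ (τ.erase v)) k else 0 :=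
    fun v _ => HL_single a z₀ (τ.erase v) k
  rw [Finset.sum_congr rfl hterm]
  by_cases haτ : a ∈ τ
  · by_cases hzτ : z₀ ∈ τ
    · -- degenerate case : a, z₀ ∈ τ
      have h1 : τ.image r = τ.erase a := by
        rw [hr, image_update a z₀ τ haτ, Finset.insert_eq_self.2]
        exact Finset.mem_erase.2 ⟨hne.symm, hzτ⟩
      have h2 : pushL r p (Finsupp.single τ k) = 0 := by
        rw [pushL_single, h1, if_neg]
        rw [Finset.card_erase_of_mem haτ, hcard]
        omega
      have h3 : HL a z₀ (Finsupp.single τ k) = 0 := by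
        rw [HL_single, if_neg]; tauto
      rw [h2, h3, map_zero, zero_add, zero_add]
      rw [Finset.sum_eq_single_of_mem z₀ hzτ]
      · rw [if_pos ⟨Finset.mem_erase.2 ⟨hne, haτ⟩, Finset.notMem_erase z₀ τ⟩,
          Finset.insert_erase hzτ]
      · intro v hv hvz
        rw [if_neg]
        rintro ⟨-, hz⟩
        exact hz (Finset.mem_erase.2 ⟨Ne.symm hvz, hzτ⟩)
    · -- main case : a ∈ τ, z₀ ∉ τ
      have h1 : τ.image r = insert z₀ (τ.erase a) := by rw [hr]; exact image_update a z₀ τ haτ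
      have hz₀e : z₀ ∉ τ.erase a := fun h => hzτ (Finset.mem_of_mem_erase h)
      have hcard1 : (insert z₀ (τ.erase a)).card = p + 1 := by
        rw [Finset.card_insert_of_notMem hz₀e, Finset.card_erase_of_mem haτ, hcard]
        omega
      have h2 : pushL r p (Finsupp.single τ k) = Finsupp.single (insert z₀ (τ.erase a)) k := by
        rw [pushL_single, h1, if_pos hcard1]
      have h3 : HL a z₀ (Finsupp.single τ k) = Finsupp.single (insert z₀ τ) k := by
        rw [HL_single, if_pos ⟨haτ, hzτ⟩]
      -- boundary of the cone
      have h4 : bdry V (Finsupp.single (insert z₀ τ) k) =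
          Finsupp.single τ k + ∑ v ∈ τ, Finsupp.single (insert z₀ (τ.erase v)) k := by
        rw [bdry_single, Finset.sum_insert hzτ, Finset.erase_insert hzτ]
        congr 1
        refine Finset.sum_congr rfl (fun v hv => ?_)
        have : v ≠ z₀ := fun h => hzτ (h ▸ hv)
        rw [Finset.erase_insert_of_ne (Ne.symm this)]
      -- the H∂ sum
      have hPa : ¬(a ∈ τ.erase a ∧ z₀ ∉ τ.erase a) :=
        fun h => (Finset.mem_erase.1 h.1).1 rfl
      have h5 : (∑ v ∈ τ, if a ∈ τ.erase v ∧ z₀ ∉ τ.erase v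
            then Finsupp.single (insert z₀ (τ.erase v)) k else 0) =
          ∑ v ∈ τ.erase a, Finsupp.single (insert z₀ (τ.erase v)) k := by
        rw [← Finset.add_sum_erase _ _ haτ, if_neg hPa, zero_add]
        refine Finset.sum_congr rfl (fun v hv => ?_)
        obtain ⟨hva, hvτ⟩ := Finset.mem_erase.1 hv
        exact if_pos ⟨Finset.mem_erase.2 ⟨Ne.symm hva, haτ⟩,
          fun hz => hzτ (Finset.mem_of_mem_erase hz)⟩
      rw [h2, h3, h4, h5,
        ← Finset.add_sum_erase _ (fun v => Finsupp.single (insert z₀ (τ.erase v)) k) haτ]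
      rw [add_assoc (Finsupp.single τ k), add_assoc (Finsupp.single (insert z₀ (τ.erase a)) k),
        add_self, add_zero]
      exact add_comm _ _
  · -- trivial case : a ∉ τ
    have h1 : pushL r p (Finsupp.single τ k) = Finsupp.single τ k := by
      rw [pushL_single]
      have : τ.image r = τ := image_fix r τ (fun v hv => by
        rw [hr]; simp only [if_neg (fun h : v = a => haτ (h ▸ hv))])
      rw [this, if_pos hcard]
    have h2 : HL a z₀ (Finsupp.single τ k) = 0 := by
      rw [HL_single, if_neg]; tauto
    rw [h1, h2, map_zero, zero_add, add_self]
    refine (Finset.sum_eq_zero fun v hv => ?_).symm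
    refine if_neg ?_
    rintro ⟨hav, -⟩
    exact haτ (Finset.mem_of_mem_erase hav)

end SnapAux3
namespace SnapAux4
set_option linter.unusedSectionVars false
open Finsupp SnapAux SnapAux2 SnapAux3

variable {V W X : Type*} [DecidableEq V] [DecidableEq W] [DecidableEq X]

lemma neg_eq' {M : Type*} [AddCommGroup M] [Module (ZMod 2) M] (x : M) : -x = x :=
  neg_eq_of_add_eq_zero_left (add_self x)

lemma support_pushL (f : V → W) (p : ℕ) (c : Finset V →₀ ZMod 2) :
    ∀ τ ∈ (pushL f p c).support, τ.card = p + 1 ∧ ∃ σ ∈ c.support, τ = σ.image f := by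
  intro τ hτ
  rw [pushL_apply, Finsupp.support_filter, Finset.mem_filter] at hτ
  obtain ⟨h1, h2⟩ := hτ
  refine ⟨h2, ?_⟩
  obtain ⟨σ, hσ, rfl⟩ := Finset.mem_image.1 (Finsupp.mapDomain_support h1)
  exact ⟨σ, hσ, rfl⟩

lemma support_HL (a z₀ : V) (c : Finset V →₀ ZMod 2) :
    ∀ τ' ∈ (HL a z₀ c).support, ∃ τ ∈ c.support, a ∈ τ ∧ z₀ ∉ τ ∧ τ' = insert z₀ τ := by
  intro τ' hτ'
  rw [HL, LinearMap.comp_apply, Finsupp.lmapDomain_apply] at hτ'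
  obtain ⟨τ, hτ, rfl⟩ := Finset.mem_image.1 (Finsupp.mapDomain_support hτ')
  rw [filterLin_apply] at hτ
  have h1 := Finsupp.mem_support_iff.1 hτ
  rw [Finsupp.filter_apply] at h1
  by_cases hP : a ∈ τ ∧ z₀ ∉ τ
  · rw [if_pos hP] at h1
    exact ⟨τ, Finsupp.mem_support_iff.2 h1, hP.1, hP.2, rfl⟩
  · rw [if_neg hP] at h1
    exact absurd rfl h1

lemma mem_chainsIn_iff {K : Set (Finset V)} {p : ℕ} {c : Finset V →₀ ZMod 2} :
    c ∈ chainsIn K p ↔ ∀ τ ∈ c.support, τ ∈ K ∧ τ.card = p + 1 := by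
  rw [chainsIn, Finsupp.mem_supported]
  constructor
  · intro h τ hτ
    exact h hτ
  · intro h τ hτ
    exact h τ hτ

lemma pushL_id (p : ℕ) (c : Finset V →₀ ZMod 2) (hc : ∀ τ ∈ c.support, τ.card = p + 1) :
    pushL (fun v : V => v) p c = c := by
  refine eq_on_of_single (pushL (fun v : V => v) p) LinearMap.id c (fun τ hτ k => ?_)
  rw [pushL_single, image_fix _ _ (fun _ _ => rfl), if_pos (hc τ hτ), LinearMap.id_apply]

/-- boundary of a pushforward of a cycle of pure dimension is zero. -/
lemma bdry_pushL_eq_zero (f : V → W) (p : ℕ) (c : Finset V →₀ ZMod 2)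
    (hc : ∀ τ ∈ c.support, τ.card = p + 1) (hcyc : bdry V c = 0) :
    bdry W (pushL f p c) = 0 := by
  rw [bdry_pushL f p c hc, hcyc, map_zero]

/-- the chain-map property in the form needed for boundaries. -/
lemma pushL_bdry (f : V → W) (p : ℕ) (e : Finset V →₀ ZMod 2)
    (he : ∀ τ ∈ e.support, τ.card = p + 2) :
    pushL f p (bdry V e) = bdry W (pushL f (p + 1) e) := by
  rw [bdry_pushL f (p + 1) e he]
  rfl

end SnapAux4
open SnapAux SnapAux2 SnapAux3 SnapAux4 in
/-- the persistent Betti number of `Čech_1(A) ⊆ Čech_{1+ε}(A)` is bounded by the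
Betti number of the snap complex `Q_1 = q(Čech_1(A))`. -/
theorem pBetti_le_betti_snap
    (d : ℕ) (ε : ℝ) (hε : 0 < ε)
    (Ψ : Set (Set (EuclideanSpace ℝ (Fin d)))) (hΨ : IsPartitionMesh d ε Ψ)
    (q : EuclideanSpace ℝ (Fin d) → Set (EuclideanSpace ℝ (Fin d)))
    (hq : ∀ x, q x ∈ Ψ ∧ x ∈ q x)
    (A : Finset (EuclideanSpace ℝ (Fin d))) (p : ℕ) :
    pBetti (cech d 1 A) (cech d (1 + ε) A) p ≤
      betti {τ | ∃ σ ∈ cech d 1 A, τ = σ.image q} p := by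
  -- the retraction `s` from cells to points of `A`, and the composite `g`
  let s : Set (EuclideanSpace ℝ (Fin d)) → (EuclideanSpace ℝ (Fin d)) := fun ψ => if h : (ψ ∩ ↑A).Nonempty then h.choose else 0
  let g : (EuclideanSpace ℝ (Fin d)) → (EuclideanSpace ℝ (Fin d)) := fun v => s (q v)
  have hgmem : ∀ a ∈ A, g a ∈ (q a : Set (EuclideanSpace ℝ (Fin d))) ∩ ↑A := by
    intro a ha
    have h : ((q a : Set (EuclideanSpace ℝ (Fin d))) ∩ ↑A).Nonempty := ⟨a, (hq a).2, ha⟩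
    show (if h : ((q a : Set (EuclideanSpace ℝ (Fin d))) ∩ ↑A).Nonempty then h.choose else 0) ∈ (q a : Set (EuclideanSpace ℝ (Fin d))) ∩ ↑A
    rw [dif_pos h]
    exact h.choose_spec
  have hgA : ∀ a ∈ A, g a ∈ A := fun a ha => (hgmem a ha).2
  have hcell : ∀ a ∈ A, q (g a) = q a := by
    intro a ha
    obtain ⟨ψ, -, huniq⟩ := hΨ.1 (g a)
    have e1 : q (g a) = ψ := huniq _ ⟨(hq (g a)).1, (hq (g a)).2⟩
    have e2 : q a = ψ := huniq _ ⟨(hq a).1, (hgmem a ha).1⟩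
    rw [e1, e2]
  have hgg : ∀ a ∈ A, g (g a) = g a := by
    intro a ha
    show s (q (g a)) = s (q a)
    rw [hcell a ha]
  have hdist : ∀ a ∈ A, dist a (g a) ≤ ε := by
    intro a ha
    have h1 : edist a (g a) ≤ EMetric.diam (q a) :=
      EMetric.edist_le_diam_of_mem (hq a).2 (hgmem a ha).1
    have h2 : edist a (g a) ≤ ENNReal.ofReal ε := h1.trans (hΨ.2 _ (hq a).1)
    rw [edist_dist] at h2
    exact (ENNReal.ofReal_le_ofReal_iff hε.le).1 h2
  -- membership of snapped simplices in the larger Čech complex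
  have hKL : ∀ σ ∈ cech d 1 A, ∀ τ : Finset (EuclideanSpace ℝ (Fin d)), τ.Nonempty →
      (∀ v ∈ τ, v ∈ σ ∨ ∃ b ∈ σ, v = g b) → τ ∈ cech d (1 + ε) A := by
    intro σ hσ τ hne hsub
    obtain ⟨hσne, hσA, x, hx⟩ := hσ
    refine ⟨hne, ?_, x, ?_⟩
    · intro v hv
      rcases hsub v (Finset.mem_coe.1 hv) with h | ⟨b, hb, rfl⟩
      · exact hσA (Finset.mem_coe.2 h)
      · exact Finset.mem_coe.2 (hgA b (Finset.mem_coe.1 (hσA (Finset.mem_coe.2 hb))))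
    · intro b hb
      rcases hsub b hb with h | ⟨c, hc, rfl⟩
      · have := hx b h
        linarith
      · have hcA : c ∈ A := Finset.mem_coe.1 (hσA (Finset.mem_coe.2 hc))
        calc dist (g c) x ≤ dist (g c) c + dist c x := dist_triangle _ _ _
          _ ≤ ε + 1 := add_le_add (by rw [dist_comm]; exact hdist c hcA) (hx c hc)
          _ = 1 + ε := add_comm ε 1
  -- abbreviations
  set K : Set (Finset (EuclideanSpace ℝ (Fin d))) := cech d 1 A with hKdef
  set L : Set (Finset (EuclideanSpace ℝ (Fin d))) := cech d (1 + ε) A with hLdef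
  set Q : Set (Finset (Set (EuclideanSpace ℝ (Fin d)))) := {τ | ∃ σ ∈ cech d 1 A, τ = σ.image q} with hQdef
  -- homotopy fact
  have hBLdef : bdriesIn L p =
      Submodule.map (bdry (EuclideanSpace ℝ (Fin d))) (chainsIn L (p + 1)) := rfl
  have homotopyFact : ∀ z ∈ cyclesIn K p,
      pushL s p (pushL (fun v : (EuclideanSpace ℝ (Fin d)) => q v) p z) + z ∈ bdriesIn L p := by
    intro z hz
    obtain ⟨hz1, hz2⟩ := Submodule.mem_inf.1 hz
    have hzc : ∀ τ ∈ z.support, τ.card = p + 1 := fun τ hτ => (mem_chainsIn_iff.1 hz1 τ hτ).2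
    have hzK : ∀ τ ∈ z.support, τ ∈ K := fun τ hτ => (mem_chainsIn_iff.1 hz1 τ hτ).1
    have hzA : ∀ τ ∈ z.support, ∀ v ∈ τ, v ∈ A := by
      intro τ hτ v hv
      obtain ⟨-, hτA, -⟩ := hzK τ hτ
      exact Finset.mem_coe.1 (hτA (Finset.mem_coe.2 hv))
    have hz0 : bdry (EuclideanSpace ℝ (Fin d)) z = 0 := LinearMap.mem_ker.1 hz2
    rw [pushL_pushL _ s p z hzc]
    have main : ∀ S : Finset (EuclideanSpace ℝ (Fin d)),
        pushL (fun v => if v ∈ S then g v else v) p z + z ∈ bdriesIn L p := by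
      intro S
      induction S using Finset.induction_on with
      | empty =>
        have h1 : pushL (fun v => if v ∈ (∅ : Finset (EuclideanSpace ℝ (Fin d)))
            then g v else v) p z = z := by
          rw [pushL_congr _ (fun v => v) p z (fun τ hτ v hv => if_neg (Finset.notMem_empty v)),
            pushL_id p z hzc]
        rw [h1, add_self]
        exact Submodule.zero_mem _
      | @insert a S haS ih =>
        by_cases haA : a ∈ A
        · set c := pushL (fun v => if v ∈ S then g v else v) p z with hc
          have hcsupp : ∀ τ ∈ c.support, τ.card = p + 1 := by
            rw [hc]
            exact fun τ hτ => (support_pushL _ p z τ hτ).1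
          have hcb : bdry (EuclideanSpace ℝ (Fin d)) c = 0 := by
            rw [hc]
            exact bdry_pushL_eq_zero _ p z hzc hz0
          have hstep : pushL (fun v => if v ∈ insert a S then g v else v) p z
              = pushL (fun v => if v = a then g a else v) p c := by
            rw [hc, pushL_pushL _ _ p z hzc]
            refine pushL_congr _ _ p z (fun τ hτ v hv => ?_)
            have hvA : v ∈ A := hzA τ hτ v hv
            by_cases hvS : v ∈ S
            · rw [if_pos (Finset.mem_insert_of_mem hvS), if_pos hvS]
              by_cases hgva : g v = a
              · rw [if_pos hgva, ← hgva, hgg v hvA]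
              · rw [if_neg hgva]
            · by_cases hva : v = a
              · subst hva
                rw [if_pos (Finset.mem_insert_self v S), if_neg hvS, if_pos rfl]
              · rw [if_neg (by simp [hva, hvS] : ¬ v ∈ insert a S), if_neg hvS, if_neg hva]
          rw [hstep]
          by_cases hag : a = g a
          · have hid : pushL (fun v => if v = a then g a else v) p c = c := by
              rw [pushL_congr _ (fun v => v) p c (fun τ hτ v hv => by
                by_cases h : v = a
                · rw [if_pos h, h, ← hag]
                · rw [if_neg h]), pushL_id p c hcsupp]
            rw [hid]
            exact ih
          · have hhom := homotopy_single_move a (g a) hag p c hcsupp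
            rw [hcb, map_zero, add_zero] at hhom
            have hHLmem : HL a (g a) c ∈ chainsIn L (p + 1) := by
              refine mem_chainsIn_iff.2 (fun τ' hτ' => ?_)
              obtain ⟨τ, hτc, haτ, hgaτ, rfl⟩ := support_HL a (g a) c τ' hτ'
              rw [hc] at hτc
              obtain ⟨hτcard, σ, hσz, rfl⟩ := support_pushL _ p z τ hτc
              constructor
              · refine hKL σ (hzK σ hσz) _ (Finset.insert_nonempty _ _) ?_
                intro v hv
                rcases Finset.mem_insert.1 hv with rfl | hvτ
                · obtain ⟨b, hb, hba⟩ := Finset.mem_image.1 haτ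
                  by_cases hbS : b ∈ S
                  · rw [if_pos hbS] at hba
                    exact Or.inr ⟨b, hb, by rw [← hba, hgg b (hzA σ hσz b hb)]⟩
                  · rw [if_neg hbS] at hba
                    exact Or.inr ⟨b, hb, by rw [hba]⟩
                · obtain ⟨b, hb, rfl⟩ := Finset.mem_image.1 hvτ
                  by_cases hbS : b ∈ S
                  · rw [if_pos hbS]
                    exact Or.inr ⟨b, hb, rfl⟩
                  · rw [if_neg hbS]
                    exact Or.inl hb
              · rw [Finset.card_insert_of_notMem hgaτ, hτcard]
            have hbd : bdry (EuclideanSpace ℝ (Fin d)) (HL a (g a) c) ∈ bdriesIn L p := by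
              rw [hBLdef]
              exact Submodule.mem_map_of_mem hHLmem
            rw [← hhom] at hbd
            have hfinal : pushL (fun v => if v = a then g a else v) p c + z
                = (pushL (fun v => if v = a then g a else v) p c + c) + (c + z) := by
              rw [add_assoc, ← add_assoc c c z, add_self, zero_add]
            rw [hfinal]
            exact Submodule.add_mem _ hbd ih
        · have heq : pushL (fun v => if v ∈ insert a S then g v else v) p z
              = pushL (fun v => if v ∈ S then g v else v) p z := by
            refine pushL_congr _ _ p z (fun τ hτ v hv => ?_)
            have hvA : v ∈ A := hzA τ hτ v hv
            have hva : v ≠ a := fun h => haA (h ▸ hvA)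
            by_cases hvS : v ∈ S
            · rw [if_pos (Finset.mem_insert_of_mem hvS), if_pos hvS]
            · rw [if_neg (by simp [hva, hvS] : ¬ v ∈ insert a S), if_neg hvS]
          rw [heq]
          exact ih
    have hfin : pushL (fun v => s (q v)) p z
        = pushL (fun v => if v ∈ A then g v else v) p z :=
      pushL_congr _ _ p z (fun τ hτ v hv => by rw [if_pos (hzA τ hτ v hv)])
    rw [hfin]
    exact main A
  -- the pushforward along q maps cycles of K to cycles of Q
  have qcycles : ∀ z ∈ cyclesIn K p,
      pushL (fun v : (EuclideanSpace ℝ (Fin d)) => q v) p z ∈ cyclesIn Q p := by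
    intro z hz
    obtain ⟨hz1, hz2⟩ := Submodule.mem_inf.1 hz
    have hzc : ∀ τ ∈ z.support, τ.card = p + 1 := fun τ hτ => (mem_chainsIn_iff.1 hz1 τ hτ).2
    refine Submodule.mem_inf.2 ⟨mem_chainsIn_iff.2 ?_, LinearMap.mem_ker.2 ?_⟩
    · intro τ hτ
      obtain ⟨hcard, σ, hσ, rfl⟩ := support_pushL _ p z τ hτ
      exact ⟨⟨σ, (mem_chainsIn_iff.1 hz1 σ hσ).1, rfl⟩, hcard⟩
    · exact bdry_pushL_eq_zero _ p z hzc (LinearMap.mem_ker.1 hz2)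
  -- the pushforward along s maps boundaries of Q to boundaries of L
  have sbdries : ∀ x ∈ bdriesIn Q p, pushL s p x ∈ bdriesIn L p := by
    intro x hx
    obtain ⟨e, he, rfl⟩ := hx
    have hec : ∀ τ ∈ e.support, τ.card = p + 2 := fun τ hτ => (mem_chainsIn_iff.1 he τ hτ).2
    rw [pushL_bdry s p e hec, hBLdef]
    refine Submodule.mem_map_of_mem (mem_chainsIn_iff.2 ?_)
    intro τ' hτ'
    obtain ⟨hcard, τ, hτ, rfl⟩ := support_pushL s (p + 1) e τ' hτ'
    obtain ⟨⟨σ, hσK, rfl⟩, -⟩ := mem_chainsIn_iff.1 he τ hτ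
    refine ⟨?_, hcard⟩
    refine hKL σ hσK _ (Finset.card_pos.mp (by rw [hcard]; omega)) ?_
    intro v hv
    obtain ⟨w, hw, rfl⟩ := Finset.mem_image.1 hv
    obtain ⟨b, hb, rfl⟩ := Finset.mem_image.1 hw
    exact Or.inr ⟨b, hb, rfl⟩
  -- assemble the rank bound
  set f₁ := pushL (fun v : (EuclideanSpace ℝ (Fin d)) => q v) p with hf₁
  set f₂ := pushL s p with hf₂
  set BQ := bdriesIn Q p with hBQ
  set BL := bdriesIn L p with hBL
  have hcomap : BQ ≤ BL.comap f₂ := fun x hx => sbdries x hx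
  set φ := Submodule.mapQ BQ BL f₂ hcomap with hφ
  have key : ∀ z ∈ cyclesIn K p, φ (BQ.mkQ (f₁ z)) = BL.mkQ z := by
    intro z hz
    rw [Submodule.mkQ_apply, Submodule.mkQ_apply, hφ, Submodule.mapQ_apply,
      Submodule.Quotient.eq]
    have h1 : f₂ (f₁ z) - z = f₂ (f₁ z) + z := by
      rw [sub_eq_add_neg, neg_eq' z]
    rw [h1]
    exact homotopyFact z hz
  set Mgoal := Submodule.map BL.mkQ (cyclesIn K p) with hM
  set N := Submodule.map BQ.mkQ (cyclesIn Q p) with hN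
  set P := Submodule.map BQ.mkQ (Submodule.map f₁ (cyclesIn K p)) with hP
  have hPN : P ≤ N := by
    refine Submodule.map_mono ?_
    rintro x ⟨z, hz, rfl⟩
    exact qcycles z hz
  have hMP : Mgoal ≤ Submodule.map φ P := by
    rintro x ⟨z, hz, rfl⟩
    exact ⟨BQ.mkQ (f₁ z), ⟨f₁ z, ⟨z, hz, rfl⟩, rfl⟩, key z hz⟩
  have step1 : pBetti K L p = Module.rank (ZMod 2) Mgoal := rfl
  have step5 : betti Q p = Module.rank (ZMod 2) N := rfl
  rw [step1, step5]
  calc Module.rank (ZMod 2) Mgoal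
      ≤ Module.rank (ZMod 2) (Submodule.map φ P) := Submodule.rank_mono hMP
    _ ≤ Module.rank (ZMod 2) P := rank_map_le φ P
    _ ≤ Module.rank (ZMod 2) N := Submodule.rank_mono hPN
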